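/- arXiv:1009.2874 — 3 statements merged into one kernel-verified Lean document; each statement's English description precedes it below -/
import Mathlib

section
/- There exists a constant C > 0, depending only on N and p, such that for every admissible function u ∈ M one has sup_{r ∈ [0,1]} u(r) = u(1) ≤ C ‖u‖. -/
/-! On `(1/2, 1)` the weight `r ^ (N - 1)` is at least `2 ^ (1 - N)`, so the weighted energy
controls the unweighted `W^{1,p}` energy there. Since `u` is non-decreasing, `u (1/2)` is
bounded by the `L^p` mean of `u` over `(1/2, 1)`, and by Hölder the increment
`u 1 - u (1/2) ≤ ∫_{1/2}^1 |u'|` is bounded by the `L^p` norm of `u'` over `(1/2, 1)`. -/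

open MeasureTheory Real Set

noncomputable section

/-- A function `u : [0,1] → ℝ` is admissible (belongs to the cone `M`) with density `u'`:
nonnegative, monotone non-decreasing, absolutely continuous with measurable derivative `u'`,
and with finite weighted `W^{1,p}` energy `∫_0^1 (|u'|^p + u^p) r^{N-1} dr < ∞`. -/
def Admissible (N : ℕ) (p : ℝ) (u u' : ℝ → ℝ) : Prop :=
  (∀ r ∈ Icc (0:ℝ) 1, 0 ≤ u r) ∧
  MonotoneOn u (Icc (0:ℝ) 1) ∧
  Measurable u' ∧
  (∀ r ∈ Icc (0:ℝ) 1, u r = u 0 + ∫ s in (0:ℝ)..r, u' s) ∧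
  IntegrableOn (fun r => (|u' r| ^ p + u r ^ p) * r ^ (N - 1)) (Ioo (0:ℝ) 1)

/-- The radial `W^{1,p}` norm `‖u‖ = (∫_0^1 (|u'|^p + u^p) r^{N-1} dr)^{1/p}`. -/
def Mnorm (N : ℕ) (p : ℝ) (u u' : ℝ → ℝ) : ℝ :=
  (∫ r in Ioo (0:ℝ) 1, (|u' r| ^ p + u r ^ p) * r ^ (N - 1)) ^ (1 / p)

/-- Assumption (A) on the weight `a`: measurable, monotone non-decreasing, not a.e. constant,
a.e. positive, and integrable on `(0,1)`. -/
def CondA (a : ℝ → ℝ) : Prop :=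
  Measurable a ∧ MonotoneOn a (Ioo (0:ℝ) 1) ∧
  (¬ ∃ c : ℝ, ∀ᵐ r ∂(volume.restrict (Ioo (0:ℝ) 1)), a r = c) ∧
  (∀ᵐ r ∂(volume.restrict (Ioo (0:ℝ) 1)), 0 < a r) ∧
  IntegrableOn a (Ioo (0:ℝ) 1)

/-- The primitive `F(t) = ∫_0^t f(s) ds`. -/
def Fint (f : ℝ → ℝ) (t : ℝ) : ℝ := ∫ s in (0:ℝ)..t, f s

/-- Assumption (F) on the nonlinearity `f`: `C¹` on `[0,∞)`, `f(0) = 0`, `f > 0` on `(0,∞)`,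
and `t ↦ f(t)/t^{p-1}` strictly increasing on `(0,∞)`. -/
def CondF (p : ℝ) (f : ℝ → ℝ) : Prop :=
  ContDiffOn ℝ 1 f (Ici (0:ℝ)) ∧ f 0 = 0 ∧ (∀ t > (0:ℝ), 0 < f t) ∧
  StrictMonoOn (fun t => f t / t ^ (p - 1)) (Ioi (0:ℝ))

/-- `v` is a `C¹` function on `[0,1]` with derivative `v'`. -/
def IsC1On01 (v v' : ℝ → ℝ) : Prop :=
  (∀ r ∈ Icc (0:ℝ) 1, HasDerivAt v (v' r) r) ∧ ContinuousOn v' (Icc (0:ℝ) 1)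

/-- `u` is a radial weak solution of `-Δ_p u + u^{p-1} = λ a f(u)` with Neumann boundary
conditions on the unit ball, tested against all `C¹` functions `v` on `[0,1]`. -/
def WeakSolution (N : ℕ) (p lam : ℝ) (a f : ℝ → ℝ) (u u' : ℝ → ℝ) : Prop :=
  ∀ v v' : ℝ → ℝ, IsC1On01 v v' →
    ∫ r in Ioo (0:ℝ) 1,
        (|u' r| ^ (p - 2) * u' r * v' r + u r ^ (p - 1) * v r) * r ^ (N - 1)
      = lam * ∫ r in Ioo (0:ℝ) 1, a r * f (u r) * v r * r ^ (N - 1)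

/-- The set of values `∫_0^1 a F(u) r^{N-1} dr` over admissible `u` with `‖u‖ = 1`;
its supremum is the quantity `S`. -/
def Svals (N : ℕ) (p : ℝ) (a f : ℝ → ℝ) : Set ℝ :=
  { y | ∃ u u' : ℝ → ℝ, Admissible N p u u' ∧ Mnorm N p u u' = 1 ∧
      y = ∫ r in Ioo (0:ℝ) 1, a r * Fint f (u r) * r ^ (N - 1) }

/-- `u` is a maximizer for `S`: admissible, with unit norm, achieving the supremum. -/
def IsMaximizer (N : ℕ) (p : ℝ) (a f : ℝ → ℝ) (u u' : ℝ → ℝ) : Prop :=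
  Admissible N p u u' ∧ Mnorm N p u u' = 1 ∧
  (∫ r in Ioo (0:ℝ) 1, a r * Fint f (u r) * r ^ (N - 1)) = sSup (Svals N p a f)

/-- Assumption (F') on `f` (with derivative `f'`): `C¹` on `[0,∞)`, `f(t) = o(t^{p-1})`
as `t → 0⁺`, `f'(t)t - (p-1)f(t) > 0` for `t > 0`, and the Ambrosetti–Rabinowitz condition
`f(t)t ≥ γ F(t)` for some `γ > p`. -/
def CondF' (p : ℝ) (f f' : ℝ → ℝ) : Prop :=
  (∀ t ∈ Ici (0:ℝ), HasDerivWithinAt f (f' t) (Ici (0:ℝ)) t) ∧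
  ContinuousOn f' (Ici (0:ℝ)) ∧
  Filter.Tendsto (fun t => f t / t ^ (p - 1)) (nhdsWithin 0 (Ioi (0:ℝ))) (nhds 0) ∧
  (∀ t > (0:ℝ), 0 < f' t * t - (p - 1) * f t) ∧
  (∃ γ > p, ∀ t > (0:ℝ), f t * t ≥ γ * Fint f t)

/-- Assumption (F''): `t ↦ f(t)/t^{p-1}` is strictly increasing on `(0,∞)`. -/
def CondF'' (p : ℝ) (f : ℝ → ℝ) : Prop :=
  StrictMonoOn (fun t => f t / t ^ (p - 1)) (Ioi (0:ℝ))

/-- The Nehari set `𝒩`. -/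
def Nehari (N : ℕ) (p : ℝ) (a f : ℝ → ℝ) (u u' : ℝ → ℝ) : Prop :=
  Admissible N p u u' ∧ (¬ ∀ r ∈ Icc (0:ℝ) 1, u r = 0) ∧
  (Mnorm N p u u') ^ p = ∫ r in Ioo (0:ℝ) 1, a r * f (u r) * u r * r ^ (N - 1)

/-- The functional `J(u) = (1/p)‖u‖^p - ∫_0^1 a F(u) r^{N-1} dr`. -/
def Jfun (N : ℕ) (p : ℝ) (a f : ℝ → ℝ) (u u' : ℝ → ℝ) : ℝ :=
  (1 / p) * (Mnorm N p u u') ^ p -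
    ∫ r in Ioo (0:ℝ) 1, a r * Fint f (u r) * r ^ (N - 1)

/-- The set of values of `J` on the Nehari set; its infimum is `c₀`. -/
def Jvals (N : ℕ) (p : ℝ) (a f : ℝ → ℝ) : Set ℝ :=
  { y | ∃ u u' : ℝ → ℝ, Nehari N p a f u u' ∧ y = Jfun N p a f u u' }

theorem integral_le_integral_rpow_one_div_of_measureReal_univ_le_one {α : Type*}
    [MeasurableSpace α] {μ : Measure α} [IsFiniteMeasure μ] (hμ : μ.real univ ≤ 1) {p : ℝ}
    (hp : 1 < p) {f : α → ℝ} (hf0 : 0 ≤ᵐ[μ] f) (hf : MemLp f (ENNReal.ofReal p) μ) :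
    ∫ x, f x ∂μ ≤ (∫ x, f x ^ p ∂μ) ^ (1 / p) := by
  have hpq := Real.HolderConjugate.conjExponent hp
  have holder := integral_mul_le_Lp_mul_Lq_of_nonneg hpq hf0
    (ae_of_all _ fun _ => zero_le_one) hf (memLp_const 1)
  simp only [mul_one, one_rpow, integral_const, smul_eq_mul] at holder
  refine holder.trans (mul_le_of_le_one_right (rpow_nonneg ?_ _) ?_)
  · exact integral_nonneg_of_ae (hf0.mono fun x hx => rpow_nonneg hx p)
  · exact rpow_le_one measureReal_nonneg hμ (div_nonneg zero_le_one hpq.symm.nonneg)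

theorem sub_le_intervalIntegral_abs_of_eq_add_integral {u u' : ℝ → ℝ} {a b : ℝ}
    (ha : 0 ≤ a) (hab : a ≤ b) (hua : u a = u 0 + ∫ s in (0:ℝ)..a, u' s)
    (hub : u b = u 0 + ∫ s in (0:ℝ)..b, u' s) (hint : IntervalIntegrable u' volume a b) :
    u b - u a ≤ ∫ s in a..b, |u' s| := by
  by_cases h0a : IntervalIntegrable u' volume 0 a
  · calc u b - u a = ∫ s in a..b, u' s := by
          rw [hua, hub, add_sub_add_left_eq_sub,
            intervalIntegral.integral_interval_sub_left (h0a.trans hint) h0a]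
      _ ≤ |∫ s in a..b, u' s| := le_abs_self _
      _ ≤ ∫ s in a..b, |u' s| := intervalIntegral.abs_integral_le_integral_abs hab
  · -- `∫ s in 0..a, u' s` and `∫ s in 0..b, u' s` are junk zeros, so `u a = u b = u 0`.
    have h0b : ¬ IntervalIntegrable u' volume 0 b := fun h => h0a <| h.mono_set <| by
      rw [uIcc_of_le ha, uIcc_of_le (ha.trans hab)]
      exact Icc_subset_Icc_right hab
    rw [hua, hub, intervalIntegral.integral_undef h0a, intervalIntegral.integral_undef h0b,
      sub_self]
    exact intervalIntegral.integral_nonneg hab fun _ _ => abs_nonneg _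

theorem integrableOn_Ioo_half_one_of_integrableOn_mul_pow {f : ℝ → ℝ} (n : ℕ)
    (hf : IntegrableOn (fun r => f r * r ^ n) (Ioo 0 1)) : IntegrableOn f (Ioo (1 / 2) 1) := by
  have hpow : ∀ r ∈ Icc (1 / 2 : ℝ) 1, r ^ n ≠ 0 := fun r hr =>
    pow_ne_zero _ (by linarith [hr.1])
  have hmul := (hf.mono_set (Ioo_subset_Ioo_left (by norm_num))).mul_continuousOn_of_subset
    ((continuousOn_pow n).inv₀ hpow) measurableSet_Ioo isCompact_Icc Ioo_subset_Icc_self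
  refine hmul.congr_fun (fun r hr => ?_) measurableSet_Ioo
  simp [mul_assoc, mul_inv_cancel₀ (hpow r (Ioo_subset_Icc_self hr))]

theorem setIntegral_Ioo_half_one_le_two_pow_mul {f : ℝ → ℝ} (n : ℕ)
    (hf0 : ∀ r ∈ Ioo (0:ℝ) 1, 0 ≤ f r)
    (hf : IntegrableOn (fun r => f r * r ^ n) (Ioo 0 1)) :
    ∫ r in Ioo (1 / 2 : ℝ) 1, f r ≤ 2 ^ n * ∫ r in Ioo (0:ℝ) 1, f r * r ^ n := by
  have hsub : Ioo (1 / 2 : ℝ) 1 ⊆ Ioo 0 1 := Ioo_subset_Ioo_left (by norm_num)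
  calc ∫ r in Ioo (1 / 2 : ℝ) 1, f r
      ≤ ∫ r in Ioo (1 / 2 : ℝ) 1, 2 ^ n * (f r * r ^ n) := by
        refine setIntegral_mono_on (integrableOn_Ioo_half_one_of_integrableOn_mul_pow n hf)
          ((hf.mono_set hsub).const_mul _) measurableSet_Ioo fun r hr => ?_
        have h2r : 1 ≤ (2 * r) ^ n := one_le_pow₀ (by linarith [hr.1])
        have := hf0 r (hsub hr)
        calc f r = f r * 1 := (mul_one _).symm
          _ ≤ f r * (2 * r) ^ n := by gcongr
          _ = 2 ^ n * (f r * r ^ n) := by rw [mul_pow]; ring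
    _ = 2 ^ n * ∫ r in Ioo (1 / 2 : ℝ) 1, f r * r ^ n := integral_const_mul _ _
    _ ≤ 2 ^ n * ∫ r in Ioo (0:ℝ) 1, f r * r ^ n := by
        gcongr
        exact ae_restrict_of_forall_mem measurableSet_Ioo fun r hr =>
          mul_nonneg (hf0 r hr) (pow_nonneg hr.1.le n)

namespace Admissible

variable {N : ℕ} {p : ℝ} {u u' : ℝ → ℝ}

theorem energy_nonneg (hu : Admissible N p u u') :
    ∀ r ∈ Ioo (0:ℝ) 1, 0 ≤ |u' r| ^ p + u r ^ p := fun r hr =>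
  add_nonneg (rpow_nonneg (abs_nonneg _) _) (rpow_nonneg (hu.1 r (Ioo_subset_Icc_self hr)) _)

theorem integrableOn_energy_Ioo_half_one (hu : Admissible N p u u') :
    IntegrableOn (fun r => |u' r| ^ p + u r ^ p) (Ioo (1 / 2) 1) :=
  integrableOn_Ioo_half_one_of_integrableOn_mul_pow _ hu.2.2.2.2

theorem memLp_deriv_Ioo_half_one (hu : Admissible N p u u') (hp : 0 < p) :
    MemLp u' (ENNReal.ofReal p) (volume.restrict (Ioo (1 / 2) 1)) := by
  rw [← integrable_norm_rpow_iff hu.2.2.1.aestronglyMeasurable (by simpa using hp)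
    ENNReal.ofReal_ne_top, ENNReal.toReal_ofReal hp.le]
  refine hu.integrableOn_energy_Ioo_half_one.mono'
    (hu.2.2.1.norm.pow_const p).aestronglyMeasurable ?_
  filter_upwards [ae_restrict_mem measurableSet_Ioo] with r hr
  rw [Real.norm_of_nonneg (rpow_nonneg (norm_nonneg _) _), Real.norm_eq_abs]
  exact le_add_of_nonneg_right (rpow_nonneg (hu.1 r ⟨by linarith [hr.1], hr.2.le⟩) p)

theorem rpow_half_le (hu : Admissible N p u u') (hp : 0 < p) :
    u (1 / 2) ^ p ≤ 2 * ∫ r in Ioo (1 / 2 : ℝ) 1, (|u' r| ^ p + u r ^ p) := by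
  have hconst : ∀ r ∈ Ioo (1 / 2 : ℝ) 1, u (1 / 2) ^ p ≤ |u' r| ^ p + u r ^ p := by
    intro r hr
    have hr' : r ∈ Icc (0:ℝ) 1 := ⟨by linarith [hr.1], hr.2.le⟩
    have hmono : u (1 / 2) ^ p ≤ u r ^ p :=
      rpow_le_rpow (hu.1 _ (by norm_num)) (hu.2.1 (by norm_num) hr' hr.1.le) hp.le
    linarith [rpow_nonneg (abs_nonneg (u' r)) p]
  have h := setIntegral_ge_of_const_le_real measurableSet_Ioo measure_Ioo_lt_top.ne hconst
    hu.integrableOn_energy_Ioo_half_one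
  rw [Real.volume_real_Ioo_of_le (by norm_num)] at h
  linarith

theorem integral_abs_deriv_le (hu : Admissible N p u u') (hp : 1 < p) :
    ∫ r in Ioo (1 / 2 : ℝ) 1, |u' r| ≤
      (∫ r in Ioo (1 / 2 : ℝ) 1, (|u' r| ^ p + u r ^ p)) ^ (1 / p) := by
  have hp0 : 0 < p := zero_lt_one.trans hp
  have hvol : (volume.restrict (Ioo (1 / 2 : ℝ) 1)).real univ ≤ 1 := by
    rw [measureReal_restrict_apply_univ, Real.volume_real_Ioo_of_le (by norm_num)]
    norm_num
  refine (integral_le_integral_rpow_one_div_of_measureReal_univ_le_one hvol hp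
    (ae_of_all _ fun r => abs_nonneg (u' r)) (hu.memLp_deriv_Ioo_half_one hp0).abs).trans ?_
  refine rpow_le_rpow (setIntegral_nonneg measurableSet_Ioo fun r _ => rpow_nonneg
    (abs_nonneg _) _) ?_ (by positivity)
  refine integral_mono_of_nonneg (ae_of_all _ fun r => rpow_nonneg (abs_nonneg _) _)
    hu.integrableOn_energy_Ioo_half_one ?_
  filter_upwards [ae_restrict_mem measurableSet_Ioo] with r hr
  exact le_add_of_nonneg_right (rpow_nonneg (hu.1 r ⟨by linarith [hr.1], hr.2.le⟩) p)

theorem sub_half_le_integral_abs_deriv (hu : Admissible N p u u') (hp : 1 < p) :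
    u 1 - u (1 / 2) ≤ ∫ r in Ioo (1 / 2 : ℝ) 1, |u' r| := by
  have hint : IntervalIntegrable u' volume (1 / 2) 1 := by
    rw [intervalIntegrable_iff_integrableOn_Ioo_of_le (by norm_num)]
    exact (hu.memLp_deriv_Ioo_half_one (zero_lt_one.trans hp)).integrable
      (by simpa using hp.le)
  refine (sub_le_intervalIntegral_abs_of_eq_add_integral (by norm_num) (by norm_num)
    (hu.2.2.2.1 _ (by norm_num)) (hu.2.2.2.1 _ (by norm_num)) hint).trans_eq ?_
  rw [intervalIntegral.integral_of_le (by norm_num), integral_Ioc_eq_integral_Ioo]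

end Admissible

theorem statement2_general (N : ℕ) (p : ℝ) (hp1 : 1 < p) :
    ∃ C > (0:ℝ), ∀ u u' : ℝ → ℝ, Admissible N p u u' →
      (∀ r ∈ Icc (0:ℝ) 1, u r ≤ u 1) ∧ u 1 ≤ C * Mnorm N p u u' := by
  have hp0 : 0 < p := zero_lt_one.trans hp1
  refine ⟨2 * (2 * 2 ^ (N - 1)) ^ (1 / p), by positivity, fun u u' hu =>
    ⟨fun r hr => hu.2.1 hr ⟨zero_le_one, le_rfl⟩ hr.2, ?_⟩⟩
  set I := ∫ r in Ioo (0:ℝ) 1, (|u' r| ^ p + u r ^ p) * r ^ (N - 1)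
  set E := ∫ r in Ioo (1 / 2 : ℝ) 1, (|u' r| ^ p + u r ^ p)
  have hE0 : 0 ≤ E := setIntegral_nonneg measurableSet_Ioo fun r hr =>
    hu.energy_nonneg r (Ioo_subset_Ioo_left (by norm_num) hr)
  have hI0 : 0 ≤ I := setIntegral_nonneg measurableSet_Ioo fun r hr =>
    mul_nonneg (hu.energy_nonneg r hr) (pow_nonneg hr.1.le _)
  have hEI : E ≤ 2 ^ (N - 1) * I :=
    setIntegral_Ioo_half_one_le_two_pow_mul _ hu.energy_nonneg hu.2.2.2.2
  have hhalf : u (1 / 2) ≤ (2 * E) ^ (1 / p) := by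
    rw [one_div p, le_rpow_inv_iff_of_pos (hu.1 _ (by norm_num)) (by positivity) hp0]
    exact hu.rpow_half_le hp0
  have hderiv : ∫ r in Ioo (1 / 2 : ℝ) 1, |u' r| ≤ (2 * E) ^ (1 / p) :=
    (hu.integral_abs_deriv_le hp1).trans (rpow_le_rpow hE0 (by linarith) (by positivity))
  calc u 1 ≤ (2 * E) ^ (1 / p) + (2 * E) ^ (1 / p) := by
        linarith [hu.sub_half_le_integral_abs_deriv hp1]
    _ ≤ 2 * ((2 * 2 ^ (N - 1)) * I) ^ (1 / p) := by
        rw [← two_mul, mul_assoc 2 (2 ^ (N - 1))]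
        gcongr
    _ = 2 * (2 * 2 ^ (N - 1)) ^ (1 / p) * Mnorm N p u u' := by
        rw [mul_rpow (by positivity) hI0, mul_assoc]
        rfl

/-- uniform `L^∞` bound on the cone `M`: there is `C > 0`, depending only
on `N` and `p`, with `sup_{[0,1]} u = u(1) ≤ C ‖u‖` for every admissible `u`. -/
theorem statement2 (N : ℕ) (hN : 3 ≤ N) (p : ℝ) (hp1 : 1 < p) :
    ∃ C > (0:ℝ), ∀ u u' : ℝ → ℝ, Admissible N p u u' →
      (∀ r ∈ Icc (0:ℝ) 1, u r ≤ u 1) ∧ u 1 ≤ C * Mnorm N p u u' :=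
  statement2_general N p hp1

end
end

section
/- For every real p with 1 < p < 2 there exists a constant c_p > 0, depending only on p, such that for every positive integer n and all vectors x, y ∈ ℝ^n with (x, y) ≠ (0, 0) one has ⟨|x|^{p-2} x − |y|^{p-2} y, x − y⟩ ≥ c_p |x − y|² / (|x| + |y|)^{2-p}, where |·| is the Euclidean norm, ⟨·,·⟩ the Euclidean inner product, and |x|^{p-2}x is interpreted as 0 when x = 0. -/
open Real
open scoped RealInnerProductSpace

/-!
With `q = p - 1 ∈ (0, 1]`, `a = ‖x‖`, `b = ‖y‖` and `t = ⟪x, y⟫`, both sides of the inequality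
are affine in `t`, which ranges over `[-a b, a b]`. It therefore suffices to check the two
endpoints, which are the scalar inequalities
`q (a - b)² ≤ (a^q - b^q)(a - b)(a + b)^{1-q}` (concavity of `s ↦ s^q`, via weighted AM-GM) and
`(a + b)² ≤ (a^q + b^q)(a + b)(a + b)^{1-q}`. This gives the constant `c_p = p - 1`.
-/

namespace Real

variable {q a b : ℝ}

lemma rpow_sub_one_mul_self (ha : 0 ≤ a) (hq : q ≠ 0) : a ^ (q - 1) * a = a ^ q := by
  rw [← rpow_add_one' ha (by simpa using hq), sub_add_cancel]

lemma rpow_mul_rpow_one_sub (ha : 0 ≤ a) : a ^ q * a ^ (1 - q) = a := by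
  rw [← rpow_add' ha (by norm_num), add_sub_cancel, rpow_one]

lemma self_le_rpow_mul_add_rpow_one_sub (hq1 : q ≤ 1) (ha : 0 ≤ a) (hb : 0 ≤ b) :
    a ≤ a ^ q * (a + b) ^ (1 - q) :=
  calc a = a ^ q * a ^ (1 - q) := (rpow_mul_rpow_one_sub ha).symm
    _ ≤ a ^ q * (a + b) ^ (1 - q) := by gcongr; linarith

/-- The tangent-line inequality for the concave function `s ↦ s ^ q`, multiplied through by
`a ^ (1 - q)` so that it also holds at `a = 0`. -/
lemma mul_sub_le_rpow_sub_rpow_mul_rpow_one_sub (hq0 : 0 ≤ q) (hq1 : q ≤ 1) (ha : 0 ≤ a)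
    (hb : 0 ≤ b) : q * (a - b) ≤ (a ^ q - b ^ q) * a ^ (1 - q) := by
  have amgm : b ^ q * a ^ (1 - q) ≤ q * b + (1 - q) * a :=
    geom_mean_le_arith_mean2_weighted hq0 (by linarith) hb ha (by ring)
  have := rpow_mul_rpow_one_sub (q := q) ha
  linarith [sub_mul (a ^ q) (b ^ q) (a ^ (1 - q))]

lemma mul_sub_sq_le_rpow_sub_rpow_mul_sub_mul_rpow (hq0 : 0 ≤ q) (hq1 : q ≤ 1) (ha : 0 ≤ a)
    (hb : 0 ≤ b) : q * (a - b) ^ 2 ≤ (a ^ q - b ^ q) * (a - b) * (a + b) ^ (1 - q) := by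
  wlog hba : b ≤ a generalizing a b with H
  · convert H hb ha (le_of_not_ge hba) using 1 <;> ring_nf
  have tangent := mul_sub_le_rpow_sub_rpow_mul_rpow_one_sub hq0 hq1 ha hb
  have hpow : b ^ q ≤ a ^ q := rpow_le_rpow hb hba hq0
  have hmono : a ^ (1 - q) ≤ (a + b) ^ (1 - q) := rpow_le_rpow ha (by linarith) (by linarith)
  calc q * (a - b) ^ 2 = q * (a - b) * (a - b) := by ring
    _ ≤ (a ^ q - b ^ q) * a ^ (1 - q) * (a - b) := by gcongr
    _ ≤ (a ^ q - b ^ q) * (a + b) ^ (1 - q) * (a - b) := by gcongr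
    _ = (a ^ q - b ^ q) * (a - b) * (a + b) ^ (1 - q) := by ring

lemma add_sq_le_rpow_add_rpow_mul_add_mul_rpow (hq1 : q ≤ 1) (ha : 0 ≤ a) (hb : 0 ≤ b) :
    (a + b) ^ 2 ≤ (a ^ q + b ^ q) * (a + b) * (a + b) ^ (1 - q) := by
  have hA := self_le_rpow_mul_add_rpow_one_sub hq1 ha hb
  have hB := self_le_rpow_mul_add_rpow_one_sub hq1 hb ha
  rw [add_comm b a] at hB
  calc (a + b) ^ 2 = (a + b) * (a + b) := by ring
    _ ≤ (a ^ q * (a + b) ^ (1 - q) + b ^ q * (a + b) ^ (1 - q)) * (a + b) := by gcongr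
    _ = (a ^ q + b ^ q) * (a + b) * (a + b) ^ (1 - q) := by ring

lemma mul_sq_add_sq_sub_two_mul_le (hq0 : 0 < q) (hq1 : q ≤ 1) (ha : 0 ≤ a) (hb : 0 ≤ b) {t : ℝ}
    (ht : |t| ≤ a * b) :
    q * (a ^ 2 + b ^ 2 - 2 * t) ≤
      (a ^ (q - 1) * a ^ 2 + b ^ (q - 1) * b ^ 2 - (a ^ (q - 1) + b ^ (q - 1)) * t) *
        (a + b) ^ (1 - q) := by
  have hA := rpow_sub_one_mul_self ha hq0.ne'
  have hB := rpow_sub_one_mul_self hb hq0.ne'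
  have hsub := mul_sub_sq_le_rpow_sub_rpow_mul_sub_mul_rpow hq0.le hq1 ha hb
  have hadd := add_sq_le_rpow_add_rpow_mul_add_mul_rpow hq1 ha hb
  obtain ⟨ht₁, ht₂⟩ := abs_le.mp ht
  set D := (a + b) ^ (1 - q)
  -- the difference of the two sides is affine in `t`, with slope `s`
  set s := (a ^ (q - 1) + b ^ (q - 1)) * D - 2 * q
  have h_ab : q * (a ^ 2 + b ^ 2 - 2 * (a * b)) ≤
      (a ^ (q - 1) * a ^ 2 + b ^ (q - 1) * b ^ 2 - (a ^ (q - 1) + b ^ (q - 1)) * (a * b)) * D := by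
    have : a ^ (q - 1) * a ^ 2 + b ^ (q - 1) * b ^ 2 - (a ^ (q - 1) + b ^ (q - 1)) * (a * b) =
        (a ^ q - b ^ q) * (a - b) := by rw [← hA, ← hB]; ring
    rw [this]
    linarith
  have h_neg_ab : q * (a ^ 2 + b ^ 2 + 2 * (a * b)) ≤
      (a ^ (q - 1) * a ^ 2 + b ^ (q - 1) * b ^ 2 + (a ^ (q - 1) + b ^ (q - 1)) * (a * b)) * D := by
    have : a ^ (q - 1) * a ^ 2 + b ^ (q - 1) * b ^ 2 + (a ^ (q - 1) + b ^ (q - 1)) * (a * b) =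
        (a ^ q + b ^ q) * (a + b) := by rw [← hA, ← hB]; ring
    rw [this]
    linarith [mul_le_of_le_one_left (sq_nonneg (a + b)) hq1]
  rcases le_total 0 s with hs | hs
  · linarith [mul_le_mul_of_nonneg_left ht₂ hs]
  · linarith [mul_le_mul_of_nonpos_left ht₁ hs]

end Real

lemma inner_rpow_smul_sub_rpow_smul_ge {E : Type*} [NormedAddCommGroup E] [InnerProductSpace ℝ E]
    {p : ℝ} (hp1 : 1 < p) (hp2 : p ≤ 2) (x y : E) :
    (p - 1) * ‖x - y‖ ^ 2 / (‖x‖ + ‖y‖) ^ (2 - p) ≤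
      ⟪‖x‖ ^ (p - 2) • x - ‖y‖ ^ (p - 2) • y, x - y⟫ := by
  rcases (add_nonneg (norm_nonneg x) (norm_nonneg y)).eq_or_lt with h0 | hpos
  · have hx : x = 0 := norm_eq_zero.mp (by linarith [norm_nonneg x, norm_nonneg y])
    have hy : y = 0 := norm_eq_zero.mp (by linarith [norm_nonneg x, norm_nonneg y])
    simp [hx, hy]
  have hinner : ⟪‖x‖ ^ (p - 2) • x - ‖y‖ ^ (p - 2) • y, x - y⟫ =
      ‖x‖ ^ (p - 2) * ‖x‖ ^ 2 + ‖y‖ ^ (p - 2) * ‖y‖ ^ 2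
        - (‖x‖ ^ (p - 2) + ‖y‖ ^ (p - 2)) * ⟪x, y⟫ := by
    simp only [inner_sub_left, inner_sub_right, real_inner_smul_left,
      real_inner_self_eq_norm_sq, real_inner_comm y x]
    ring
  have key := mul_sq_add_sq_sub_two_mul_le (q := p - 1) (by linarith) (by linarith) (norm_nonneg x)
    (norm_nonneg y) (abs_real_inner_le_norm x y)
  rw [show p - 1 - 1 = p - 2 by ring, show 1 - (p - 1) = 2 - p by ring] at key
  rw [div_le_iff₀ (rpow_pos_of_pos hpos _), hinner, norm_sub_sq_real]
  linarith

/-- for `1 < p < 2` there is a constant `c_p > 0`, depending only on `p`,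
such that `⟨|x|^{p-2}x - |y|^{p-2}y, x - y⟩ ≥ c_p |x - y|² / (|x| + |y|)^{2-p}` for all
`x, y ∈ ℝ^n` with `(x, y) ≠ (0, 0)`, and all `n`. (Here `‖x‖ ^ (p-2) • x` vanishes for
`x = 0`, since `Real.rpow` assigns `0 ^ (p-2) = 0` for `p < 2`, in accordance with the
convention that `|x|^{p-2} x` is interpreted as `0` when `x = 0`.) -/
theorem statement10 (p : ℝ) (hp1 : 1 < p) (hp2 : p < 2) :
    ∃ c > (0:ℝ), ∀ n : ℕ, 0 < n → ∀ x y : EuclideanSpace ℝ (Fin n), (x, y) ≠ (0, 0) →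
      ⟪(‖x‖ ^ (p - 2)) • x - (‖y‖ ^ (p - 2)) • y, x - y⟫
        ≥ c * ‖x - y‖ ^ 2 / (‖x‖ + ‖y‖) ^ (2 - p) :=
  ⟨p - 1, by linarith, fun _ _ x y _ => inner_rpow_smul_sub_rpow_smul_ge hp1 hp2.le x y⟩
end

section
/- For every admissible function u ∈ M that is not identically zero, there exists a unique t > 0 such that t^p ‖u‖^p = ∫_0^1 a(r) f(t u(r)) t u(r) r^{N-1} dr (i.e., the ray through u meets the Nehari set 𝒩 in exactly one point). -/
open MeasureTheory Real Set

noncomputable section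

/-!
Write `f(s) s = g(s) s^p` with `g(s) = f(s) / s^(p-1)`. On the ray `t ↦ t u` the Nehari
identity becomes `ψ(t) = ‖u‖^p`, where `ψ(t) = ∫ a u^p r^(N-1) g(t u)`. The limit
`f(t) = o(t^(p-1))` and (F'') make `g` continuous and increasing on `[0, ∞)` with `g(0) = 0`,
and the Ambrosetti–Rabinowitz condition gives `F(t) ≥ F(1) t^γ`, hence
`g(s) ≥ γ F(1) s^(γ-p) → ∞`. Since `u` is monotone and not identically zero, `u ≥ u(r₀) > 0`
on some `(r₀, 1)`; there `ψ` picks up its strict monotonicity and its growth. So `ψ` is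
continuous, strictly increasing on `(0, ∞)`, vanishes at `0` and tends to `∞`: it takes the
value `‖u‖^p > 0` exactly once.
-/

open Filter Topology

lemma existsUnique_pos_eq_of_strictMonoOn {ψ : ℝ → ℝ} (hψ : Continuous ψ) (hψ0 : ψ 0 = 0)
    (hmono : StrictMonoOn ψ (Ioi 0)) (htop : Tendsto ψ atTop atTop) {X : ℝ} (hX : 0 < X) :
    ∃! t, 0 < t ∧ ψ t = X := by
  obtain ⟨T, hXT, hT⟩ := ((htop.eventually_ge_atTop X).and (eventually_ge_atTop 0)).exists
  obtain ⟨t, ht, hψt⟩ :=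
    intermediate_value_Icc hT hψ.continuousOn ⟨by rw [hψ0]; exact hX.le, hXT⟩
  have ht0 : 0 < t := ht.1.lt_of_ne (by rintro rfl; exact hX.ne' (hψt.symm.trans hψ0))
  exact ⟨t, ⟨ht0, hψt⟩, fun s hs => hmono.injOn hs.1 ht0 (hs.2.trans hψt.symm)⟩

lemma integral_pos_of_ae_pos_on {α : Type*} [MeasurableSpace α] {μ : Measure α} {g : α → ℝ}
    {S : Set α} (hg0 : 0 ≤ᵐ[μ] g) (hg : Integrable g μ) (hS : μ S ≠ 0)
    (hSpos : ∀ᵐ x ∂μ, x ∈ S → 0 < g x) : 0 < ∫ x, g x ∂μ := by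
  rw [integral_pos_iff_support_of_nonneg_ae hg0 hg]
  exact (pos_iff_ne_zero.2 hS).trans_le
    (measure_mono_ae (hSpos.mono fun x hx hxS => (hx hxS).ne'))

section RayIntegral

variable {α : Type*} [MeasurableSpace α] {μ : Measure α} {w v : α → ℝ} {G : ℝ → ℝ} {B : ℝ}

lemma ae_norm_mul_comp_mul_le (hGm : Monotone G) (hG0 : ∀ s, 0 ≤ G s)
    (hvB : ∀ᵐ x ∂μ, 0 ≤ v x ∧ v x ≤ B) {t T : ℝ} (htT : |t| ≤ T) :
    ∀ᵐ x ∂μ, ‖w x * G (t * v x)‖ ≤ ‖w x‖ * G (T * B) := by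
  filter_upwards [hvB] with x ⟨hx0, hxB⟩
  rw [norm_mul, Real.norm_of_nonneg (hG0 _)]
  refine mul_le_mul_of_nonneg_left (hGm ?_) (norm_nonneg _)
  nlinarith [le_abs_self t, abs_nonneg t]

lemma aestronglyMeasurable_mul_comp_mul (hG : Continuous G) (hw : Integrable w μ)
    (hv : AEMeasurable v μ) (t : ℝ) : AEStronglyMeasurable (fun x => w x * G (t * v x)) μ :=
  hw.aestronglyMeasurable.mul
    (hG.measurable.comp_aemeasurable (hv.const_mul t)).aestronglyMeasurable

lemma integrable_mul_comp_mul (hG : Continuous G) (hGm : Monotone G) (hG0 : ∀ s, 0 ≤ G s)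
    (hw : Integrable w μ) (hv : AEMeasurable v μ) (hvB : ∀ᵐ x ∂μ, 0 ≤ v x ∧ v x ≤ B) (t : ℝ) :
    Integrable (fun x => w x * G (t * v x)) μ :=
  (hw.norm.mul_const _).mono' (aestronglyMeasurable_mul_comp_mul hG hw hv t)
    (ae_norm_mul_comp_mul_le hGm hG0 hvB le_rfl)

lemma continuous_integral_mul_comp_mul (hG : Continuous G) (hGm : Monotone G)
    (hG0 : ∀ s, 0 ≤ G s) (hw : Integrable w μ) (hv : AEMeasurable v μ)
    (hvB : ∀ᵐ x ∂μ, 0 ≤ v x ∧ v x ≤ B) :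
    Continuous fun t => ∫ x, w x * G (t * v x) ∂μ := by
  refine continuous_iff_continuousAt.2 fun t => continuousAt_of_dominated
    (Eventually.of_forall (aestronglyMeasurable_mul_comp_mul hG hw hv))
    ?_ (hw.norm.mul_const (G ((|t| + 1) * B))) (ae_of_all _ fun x => by fun_prop)
  filter_upwards [(continuous_abs.tendsto t).eventually (gt_mem_nhds (lt_add_one |t|))]
    with s hs using ae_norm_mul_comp_mul_le hGm hG0 hvB hs.le

lemma strictMonoOn_integral_mul_comp_mul (hG : Continuous G) (hGm : Monotone G)
    (hG0 : ∀ s, 0 ≤ G s) (hGs : StrictMonoOn G (Ioi 0)) (hw : Integrable w μ)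
    (hw0 : 0 ≤ᵐ[μ] w) (hv : AEMeasurable v μ) (hvB : ∀ᵐ x ∂μ, 0 ≤ v x ∧ v x ≤ B)
    {S : Set α} (hS : μ S ≠ 0) (hSpos : ∀ᵐ x ∂μ, x ∈ S → 0 < w x ∧ 0 < v x) :
    StrictMonoOn (fun t => ∫ x, w x * G (t * v x) ∂μ) (Ioi 0) := by
  intro s hs t ht hst
  have hint := integrable_mul_comp_mul hG hGm hG0 hw hv hvB
  rw [← sub_pos, ← integral_sub (hint t) (hint s)]
  refine integral_pos_of_ae_pos_on ?_ ((hint t).sub (hint s)) hS ?_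
  · filter_upwards [hw0, hvB] with x hwx hvx
    rw [Pi.zero_apply, ← mul_sub]
    exact mul_nonneg hwx (sub_nonneg.2 (hGm (mul_le_mul_of_nonneg_right hst.le hvx.1)))
  · filter_upwards [hSpos] with x hx hxS
    obtain ⟨hwx, hvx⟩ := hx hxS
    rw [← mul_sub]
    exact mul_pos hwx (sub_pos.2 (hGs (mul_pos hs hvx) (mul_pos (lt_trans hs hst) hvx)
      (mul_lt_mul_of_pos_right hst hvx)))

lemma tendsto_integral_mul_comp_mul_atTop (hG : Continuous G) (hGm : Monotone G)
    (hG0 : ∀ s, 0 ≤ G s) (hGt : Tendsto G atTop atTop) (hw : Integrable w μ)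
    (hw0 : 0 ≤ᵐ[μ] w) (hv : AEMeasurable v μ) (hvB : ∀ᵐ x ∂μ, 0 ≤ v x ∧ v x ≤ B)
    {S : Set α} (hSm : MeasurableSet S) (hS : μ S ≠ 0) {ε : ℝ} (hε : 0 < ε)
    (hSpos : ∀ᵐ x ∂μ, x ∈ S → 0 < w x ∧ ε ≤ v x) :
    Tendsto (fun t => ∫ x, w x * G (t * v x) ∂μ) atTop atTop := by
  have hSw : 0 < ∫ x in S, w x ∂μ := by
    refine integral_pos_of_ae_pos_on (ae_restrict_of_ae hw0) hw.integrableOn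
      (S := S) (by rwa [Measure.restrict_apply_self]) (ae_restrict_of_ae ?_)
    filter_upwards [hSpos] with x hx hxS using (hx hxS).1
  have hbound : ∀ t ≥ 0, G (t * ε) * ∫ x in S, w x ∂μ ≤ ∫ x, w x * G (t * v x) ∂μ := by
    intro t ht
    have hint := integrable_mul_comp_mul hG hGm hG0 hw hv hvB t
    calc G (t * ε) * ∫ x in S, w x ∂μ = ∫ x in S, w x * G (t * ε) ∂μ := by
          rw [integral_mul_const, mul_comm]
      _ ≤ ∫ x in S, w x * G (t * v x) ∂μ := by
          refine integral_mono_ae (hw.integrableOn.mul_const _) hint.integrableOn ?_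
          filter_upwards [ae_restrict_of_ae hSpos, ae_restrict_mem hSm] with x hx hxS
          exact mul_le_mul_of_nonneg_left (hGm (mul_le_mul_of_nonneg_left (hx hxS).2 ht))
            (hx hxS).1.le
      _ ≤ ∫ x, w x * G (t * v x) ∂μ := by
          refine setIntegral_le_integral hint ?_
          filter_upwards [hw0] with x hwx using mul_nonneg hwx (hG0 _)
  exact tendsto_atTop_mono' atTop ((eventually_ge_atTop 0).mono hbound)
    ((hGt.comp (tendsto_id.atTop_mul_const hε)).atTop_mul_const hSw)

theorem existsUnique_pos_integral_mul_comp_mul_eq (hG : Continuous G) (hGm : Monotone G)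
    (hG0 : ∀ s, 0 ≤ G s) (hG00 : G 0 = 0) (hGs : StrictMonoOn G (Ioi 0))
    (hGt : Tendsto G atTop atTop) (hw : Integrable w μ) (hw0 : 0 ≤ᵐ[μ] w)
    (hv : AEMeasurable v μ) (hvB : ∀ᵐ x ∂μ, 0 ≤ v x ∧ v x ≤ B)
    {S : Set α} (hSm : MeasurableSet S) (hS : μ S ≠ 0) {ε : ℝ} (hε : 0 < ε)
    (hSpos : ∀ᵐ x ∂μ, x ∈ S → 0 < w x ∧ ε ≤ v x) {X : ℝ} (hX : 0 < X) :
    ∃! t, 0 < t ∧ ∫ x, w x * G (t * v x) ∂μ = X :=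
  existsUnique_pos_eq_of_strictMonoOn (continuous_integral_mul_comp_mul hG hGm hG0 hw hv hvB)
    (by simp [hG00])
    (strictMonoOn_integral_mul_comp_mul hG hGm hG0 hGs hw hw0 hv hvB hS
      (hSpos.mono fun x hx hxS => ⟨(hx hxS).1, hε.trans_le (hx hxS).2⟩))
    (tendsto_integral_mul_comp_mul_atTop hG hGm hG0 hGt hw hw0 hv hvB hSm hS hε hSpos) hX

end RayIntegral

section AmbrosettiRabinowitz

variable {f : ℝ → ℝ}

lemma hasDerivAt_Fint (hf : ContinuousOn f (Ici 0)) {t : ℝ} (ht : 0 < t) :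
    HasDerivAt (Fint f) (f t) t :=
  intervalIntegral.integral_hasDerivAt_right
    ((hf.mono (by simp [uIcc_of_le ht.le, Icc_subset_Ici_self])).intervalIntegrable)
    ((hf.mono Ioi_subset_Ici_self).stronglyMeasurableAtFilter isOpen_Ioi t ht)
    (hf.continuousAt (Ici_mem_nhds ht))

lemma Fint_pos (hf : ContinuousOn f (Ici 0)) (hpos : ∀ t > 0, 0 < f t) {t : ℝ} (ht : 0 < t) :
    0 < Fint f t :=
  intervalIntegral.intervalIntegral_pos_of_pos_on
    ((hf.mono (by simp [uIcc_of_le ht.le, Icc_subset_Ici_self])).intervalIntegrable)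
    (fun s hs => hpos s hs.1) ht

lemma monotoneOn_Fint_div_rpow (hf : ContinuousOn f (Ici 0)) {γ : ℝ}
    (hAR : ∀ t > 0, f t * t ≥ γ * Fint f t) :
    MonotoneOn (fun t => Fint f t / t ^ γ) (Ioi 0) := by
  have hderiv : ∀ t ∈ Ioi (0 : ℝ), HasDerivAt (fun t => Fint f t / t ^ γ)
      ((f t * t ^ γ - Fint f t * (γ * t ^ (γ - 1))) / (t ^ γ) ^ 2) t := fun t ht =>
    (hasDerivAt_Fint hf ht).div (hasDerivAt_rpow_const (Or.inl (ne_of_gt ht)))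
      (rpow_pos_of_pos ht γ).ne'
  refine monotoneOn_of_hasDerivWithinAt_nonneg (convex_Ioi 0)
    (fun t ht => (hderiv t ht).continuousAt.continuousWithinAt)
    (fun t ht => (hderiv t (interior_subset ht)).hasDerivWithinAt) fun t ht => ?_
  rw [interior_Ioi] at ht
  have hsplit : t ^ γ = t ^ (γ - 1) * t := by rw [← rpow_add_one (ne_of_gt ht)]; ring_nf
  have hnum : f t * t ^ γ - Fint f t * (γ * t ^ (γ - 1))
      = t ^ (γ - 1) * (f t * t - γ * Fint f t) := by rw [hsplit]; ring
  rw [hnum]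
  exact div_nonneg (mul_nonneg (rpow_nonneg ht.le _) (sub_nonneg.2 (hAR t ht))) (sq_nonneg _)

lemma Fint_one_mul_rpow_le (hf : ContinuousOn f (Ici 0)) {γ : ℝ}
    (hAR : ∀ t > 0, f t * t ≥ γ * Fint f t) {t : ℝ} (ht : 1 ≤ t) :
    Fint f 1 * t ^ γ ≤ Fint f t := by
  have h := monotoneOn_Fint_div_rpow hf hAR (mem_Ioi.2 one_pos) (mem_Ioi.2 (one_pos.trans_le ht)) ht
  simp only [one_rpow, div_one] at h
  rwa [le_div_iff₀ (rpow_pos_of_pos (one_pos.trans_le ht) γ)] at h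

lemma tendsto_div_rpow_atTop_of_ambrosettiRabinowitz (hf : ContinuousOn f (Ici 0))
    (hpos : ∀ t > 0, 0 < f t) {p γ : ℝ} (hp : 0 ≤ p) (hγ : p < γ)
    (hAR : ∀ t > 0, f t * t ≥ γ * Fint f t) :
    Tendsto (fun t => f t / t ^ (p - 1)) atTop atTop := by
  have hγ0 : 0 < γ := hp.trans_lt hγ
  have hbound : ∀ t ≥ (1 : ℝ), γ * Fint f 1 * t ^ (γ - p) ≤ f t / t ^ (p - 1) := by
    intro t ht
    have ht0 : 0 < t := one_pos.trans_le ht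
    have hexp : t ^ (γ - p) * t ^ (p - 1) * t = t ^ γ := by
      rw [← rpow_add ht0, ← rpow_add_one (ne_of_gt ht0)]; ring_nf
    rw [le_div_iff₀ (rpow_pos_of_pos ht0 _)]
    refine le_of_mul_le_mul_right ?_ ht0
    calc γ * Fint f 1 * t ^ (γ - p) * t ^ (p - 1) * t = γ * (Fint f 1 * t ^ γ) := by
          rw [← hexp]; ring
      _ ≤ γ * Fint f t := mul_le_mul_of_nonneg_left (Fint_one_mul_rpow_le hf hAR ht) hγ0.le
      _ ≤ f t * t := hAR t ht0
  exact tendsto_atTop_mono' atTop (eventually_ge_atTop 1 |>.mono hbound)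
    ((tendsto_rpow_atTop (sub_pos.2 hγ)).const_mul_atTop (mul_pos hγ0 (Fint_pos hf hpos one_pos)))

end AmbrosettiRabinowitz

lemma pos_of_strictMonoOn_Ioi_of_tendsto_zero {h : ℝ → ℝ} (hmono : StrictMonoOn h (Ioi 0))
    (hlim : Tendsto h (𝓝[>] 0) (𝓝 0)) {s : ℝ} (hs : 0 < s) : 0 < h s := by
  have hhalf : 0 ≤ h (s / 2) := le_of_tendsto hlim <| by
    filter_upwards [Ioo_mem_nhdsGT (half_pos hs)] with x hx
    exact (hmono hx.1 (half_pos hs) hx.2).le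
  exact hhalf.trans_lt (hmono (half_pos hs) hs (half_lt_self hs))

/-- `f(s) / s^(p-1)` at `s⁺`. Its value at `0` is the junk value `f 0 / 0 = 0` (for `p ≠ 1`),
which makes it continuous when `f(t) = o(t^(p-1))`. -/
def ratioPosPart (p : ℝ) (f : ℝ → ℝ) (s : ℝ) : ℝ := f (max s 0) / max s 0 ^ (p - 1)

section RatioPosPart

variable {p : ℝ} {f : ℝ → ℝ}

lemma ratioPosPart_of_nonneg {s : ℝ} (hs : 0 ≤ s) : ratioPosPart p f s = f s / s ^ (p - 1) := by
  simp [ratioPosPart, max_eq_left hs]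

lemma ratioPosPart_zero (hp : p ≠ 1) : ratioPosPart p f 0 = 0 := by
  simp [ratioPosPart, zero_rpow (sub_ne_zero.2 hp)]

lemma mul_self_eq_ratioPosPart_mul_rpow (hp : p ≠ 0) {s : ℝ} (hs : 0 ≤ s) :
    f s * s = ratioPosPart p f s * s ^ p := by
  rcases hs.eq_or_lt with rfl | hs
  · simp [zero_rpow hp]
  · have hsplit : s ^ p = s ^ (p - 1) * s := by rw [← rpow_add_one (ne_of_gt hs)]; ring_nf
    rw [ratioPosPart_of_nonneg hs.le, hsplit]
    field_simp [(rpow_pos_of_pos hs (p - 1)).ne']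

lemma continuous_ratioPosPart (hp : 1 < p) (hf : ContinuousOn f (Ici 0))
    (hlim : Tendsto (fun t => f t / t ^ (p - 1)) (𝓝[>] 0) (𝓝 0)) :
    Continuous (ratioPosPart p f) := by
  have hcont : ContinuousOn (fun s => f s / s ^ (p - 1)) (Ici 0) := by
    intro s hs
    rcases (mem_Ici.1 hs).eq_or_lt with rfl | hs
    · rw [← continuousWithinAt_Ioi_iff_Ici, ContinuousWithinAt]
      simpa [zero_rpow (sub_ne_zero.2 hp.ne')] using hlim
    · exact ((hf.continuousAt (Ici_mem_nhds hs)).div (continuousAt_rpow_const _ _ (Or.inl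
        (ne_of_gt hs))) (rpow_pos_of_pos hs _).ne').continuousWithinAt
  exact hcont.comp_continuous (continuous_id.max continuous_const) fun s => le_max_right s 0

lemma pos_of_strictMonoOn_div_rpow (hmono : StrictMonoOn (fun t => f t / t ^ (p - 1)) (Ioi 0))
    (hlim : Tendsto (fun t => f t / t ^ (p - 1)) (𝓝[>] 0) (𝓝 0)) {t : ℝ} (ht : 0 < t) :
    0 < f t :=
  (div_pos_iff_of_pos_right (rpow_pos_of_pos ht (p - 1))).1
    (pos_of_strictMonoOn_Ioi_of_tendsto_zero hmono hlim ht)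

lemma ratioPosPart_nonneg (hp : 1 < p) (hmono : StrictMonoOn (fun t => f t / t ^ (p - 1)) (Ioi 0))
    (hlim : Tendsto (fun t => f t / t ^ (p - 1)) (𝓝[>] 0) (𝓝 0)) (s : ℝ) :
    0 ≤ ratioPosPart p f s := by
  rcases (le_max_right s 0).eq_or_lt with h | h
  · rw [ratioPosPart, ← h, zero_rpow (sub_ne_zero.2 hp.ne'), div_zero]
  · exact (pos_of_strictMonoOn_Ioi_of_tendsto_zero hmono hlim h).le

lemma monotone_ratioPosPart (hp : 1 < p) (hmono : StrictMonoOn (fun t => f t / t ^ (p - 1)) (Ioi 0))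
    (hlim : Tendsto (fun t => f t / t ^ (p - 1)) (𝓝[>] 0) (𝓝 0)) :
    Monotone (ratioPosPart p f) := by
  intro x y hxy
  rcases (le_max_right x 0).eq_or_lt with hx | hx
  · rw [ratioPosPart, ← hx, zero_rpow (sub_ne_zero.2 hp.ne'), div_zero]
    exact ratioPosPart_nonneg hp hmono hlim y
  · exact hmono.monotoneOn hx (hx.trans_le (max_le_max hxy le_rfl)) (max_le_max hxy le_rfl)

lemma strictMonoOn_ratioPosPart (hmono : StrictMonoOn (fun t => f t / t ^ (p - 1)) (Ioi 0)) :
    StrictMonoOn (ratioPosPart p f) (Ioi 0) := fun x hx y hy hxy => by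
  simpa only [ratioPosPart_of_nonneg (le_of_lt hx), ratioPosPart_of_nonneg (le_of_lt hy)]
    using hmono hx hy hxy

lemma tendsto_ratioPosPart_atTop (htop : Tendsto (fun t => f t / t ^ (p - 1)) atTop atTop) :
    Tendsto (ratioPosPart p f) atTop atTop :=
  htop.congr' <| (eventually_ge_atTop 0).mono fun _ hs => (ratioPosPart_of_nonneg hs).symm

end RatioPosPart

lemma intervalIntegral_eq_zero_of_forall_mem_Ico {g : ℝ → ℝ} {a b : ℝ} (hab : a < b)
    (h : ∀ x ∈ Ico a b, ∫ s in a..x, g s = 0) : ∫ s in a..b, g s = 0 := by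
  by_cases hg : IntervalIntegrable g volume a b
  · have hcont := intervalIntegral.continuousOn_primitive_interval' hg left_mem_uIcc
    rw [uIcc_of_le hab.le] at hcont
    exact EqOn.of_subset_closure h hcont continuousOn_const Ico_subset_Icc_self
      (by rw [closure_Ico hab.ne]) (right_mem_Icc.2 hab.le)
  · exact intervalIntegral.integral_undef hg

section Radial

variable {N : ℕ} {p : ℝ} {u u' : ℝ → ℝ}

lemma exists_mem_Ico_pos_of_not_forall_eq_zero (hnn : ∀ r ∈ Icc (0:ℝ) 1, 0 ≤ u r)
    (hftc : ∀ r ∈ Icc (0:ℝ) 1, u r = u 0 + ∫ s in (0:ℝ)..r, u' s)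
    (hne : ¬ ∀ r ∈ Icc (0:ℝ) 1, u r = 0) : ∃ r₀ ∈ Ico (0:ℝ) 1, 0 < u r₀ := by
  by_contra! hcon
  have hzero : ∀ r ∈ Ico (0:ℝ) 1, u r = 0 := fun r hr =>
    le_antisymm (hcon r hr) (hnn r (Ico_subset_Icc_self hr))
  have hu0 : u 0 = 0 := hzero 0 (left_mem_Ico.2 one_pos)
  have hprim : ∫ s in (0:ℝ)..1, u' s = 0 :=
    intervalIntegral_eq_zero_of_forall_mem_Ico one_pos fun r hr => by
      simpa [hzero r hr, hu0] using (hftc r (Ico_subset_Icc_self hr)).symm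
  refine hne fun r hr => hr.2.eq_or_lt.elim (fun h => ?_) fun h => hzero r ⟨hr.1, h⟩
  rw [h, hftc 1 (right_mem_Icc.2 zero_le_one), hu0, hprim, add_zero]

lemma Mnorm_rpow (hp : p ≠ 0) (hnn : ∀ r ∈ Icc (0:ℝ) 1, 0 ≤ u r) :
    Mnorm N p u u' ^ p = ∫ r in Ioo (0:ℝ) 1, (|u' r| ^ p + u r ^ p) * r ^ (N - 1) := by
  have hint : 0 ≤ ∫ r in Ioo (0:ℝ) 1, (|u' r| ^ p + u r ^ p) * r ^ (N - 1) :=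
    setIntegral_nonneg measurableSet_Ioo fun r hr => by
      have := hnn r (Ioo_subset_Icc_self hr)
      have := hr.1
      positivity
  rw [Mnorm, ← rpow_mul hint, one_div_mul_cancel hp, rpow_one]

lemma restrict_Ioo_zero_one_Ioo_ne_zero {r₀ : ℝ} (hr₀ : r₀ ∈ Ico (0:ℝ) 1) :
    volume.restrict (Ioo (0:ℝ) 1) (Ioo r₀ 1) ≠ 0 := by
  rw [Measure.restrict_apply' measurableSet_Ioo,
    inter_eq_left.2 (Ioo_subset_Ioo_left hr₀.1), Real.volume_Ioo]
  exact (ENNReal.ofReal_pos.2 (sub_pos.2 hr₀.2)).ne'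

lemma integral_energy_pos (hnn : ∀ r ∈ Icc (0:ℝ) 1, 0 ≤ u r) (hmono : MonotoneOn u (Icc 0 1))
    (hint : IntegrableOn (fun r => (|u' r| ^ p + u r ^ p) * r ^ (N - 1)) (Ioo (0:ℝ) 1))
    {r₀ : ℝ} (hr₀ : r₀ ∈ Ico (0:ℝ) 1) (hur₀ : 0 < u r₀) :
    0 < ∫ r in Ioo (0:ℝ) 1, (|u' r| ^ p + u r ^ p) * r ^ (N - 1) := by
  refine integral_pos_of_ae_pos_on ?_ hint (restrict_Ioo_zero_one_Ioo_ne_zero hr₀) ?_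
  · filter_upwards [ae_restrict_mem measurableSet_Ioo] with r hr
    have := hnn r (Ioo_subset_Icc_self hr)
    have := hr.1
    simp only [Pi.zero_apply]
    positivity
  · filter_upwards [ae_restrict_mem measurableSet_Ioo] with r hr hr'
    have : 0 < u r := hur₀.trans_le
      (hmono ⟨hr₀.1, hr₀.2.le⟩ (Ioo_subset_Icc_self hr) hr'.1.le)
    have := hr.1
    positivity

lemma integral_mul_self_eq_rpow_mul_integral_ratioPosPart {a f : ℝ → ℝ} (hp : p ≠ 0)
    (hnn : ∀ r ∈ Icc (0:ℝ) 1, 0 ≤ u r) {t : ℝ} (ht : 0 ≤ t) :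
    ∫ r in Ioo (0:ℝ) 1, a r * f (t * u r) * (t * u r) * r ^ (N - 1)
      = t ^ p * ∫ r in Ioo (0:ℝ) 1, a r * u r ^ p * r ^ (N - 1) * ratioPosPart p f (t * u r) := by
  rw [← integral_const_mul]
  refine setIntegral_congr_fun measurableSet_Ioo fun r hr => ?_
  have hur := hnn r (Ioo_subset_Icc_self hr)
  rw [mul_assoc (a r), mul_self_eq_ratioPosPart_mul_rpow hp (mul_nonneg ht hur), mul_rpow ht hur]
  ring

theorem existsUnique_pos_integral_weight_mul_comp_eq {a G : ℝ → ℝ} (hp : 0 ≤ p)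
    (hG : Continuous G) (hGm : Monotone G) (hG0 : ∀ s, 0 ≤ G s) (hG00 : G 0 = 0)
    (hGs : StrictMonoOn G (Ioi 0)) (hGt : Tendsto G atTop atTop)
    (hapos : ∀ᵐ r ∂(volume.restrict (Ioo (0:ℝ) 1)), 0 < a r)
    (haint : IntegrableOn a (Ioo (0:ℝ) 1))
    (hnn : ∀ r ∈ Icc (0:ℝ) 1, 0 ≤ u r) (hmono : MonotoneOn u (Icc 0 1))
    {r₀ : ℝ} (hr₀ : r₀ ∈ Ico (0:ℝ) 1) (hur₀ : 0 < u r₀) {X : ℝ} (hX : 0 < X) :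
    ∃! t, 0 < t ∧ ∫ r in Ioo (0:ℝ) 1, a r * u r ^ p * r ^ (N - 1) * G (t * u r) = X := by
  have hu : AEMeasurable u (volume.restrict (Ioo (0:ℝ) 1)) :=
    aemeasurable_restrict_of_monotoneOn measurableSet_Ioo (hmono.mono Ioo_subset_Icc_self)
  have hbound : ∀ᵐ r ∂(volume.restrict (Ioo (0:ℝ) 1)), 0 ≤ u r ∧ u r ≤ u 1 := by
    filter_upwards [ae_restrict_mem measurableSet_Ioo] with r hr
    exact ⟨hnn r (Ioo_subset_Icc_self hr),
      hmono (Ioo_subset_Icc_self hr) (right_mem_Icc.2 zero_le_one) hr.2.le⟩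
  have hw : IntegrableOn (fun r => a r * u r ^ p * r ^ (N - 1)) (Ioo (0:ℝ) 1) := by
    simp_rw [mul_assoc]
    refine haint.mul_bdd (c := u 1 ^ p)
      ((hu.pow_const p).mul (measurable_id.pow_const _).aemeasurable).aestronglyMeasurable ?_
    filter_upwards [hbound, ae_restrict_mem measurableSet_Ioo] with r hr hr'
    rw [norm_mul, Real.norm_of_nonneg (rpow_nonneg hr.1 _),
      Real.norm_of_nonneg (pow_nonneg hr'.1.le _)]
    calc u r ^ p * r ^ (N - 1) ≤ u r ^ p * 1 :=
          mul_le_mul_of_nonneg_left (pow_le_one₀ hr'.1.le hr'.2.le) (rpow_nonneg hr.1 _)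
      _ ≤ u 1 ^ p := by rw [mul_one]; exact rpow_le_rpow hr.1 hr.2 hp
  have hw0 : 0 ≤ᵐ[volume.restrict (Ioo (0:ℝ) 1)] fun r => a r * u r ^ p * r ^ (N - 1) := by
    filter_upwards [hapos, hbound, ae_restrict_mem measurableSet_Ioo] with r har hr hr'
    have := hr.1
    have := hr'.1
    simp only [Pi.zero_apply]
    positivity
  refine existsUnique_pos_integral_mul_comp_mul_eq hG hGm hG0 hG00 hGs hGt hw hw0 hu hbound
    measurableSet_Ioo (restrict_Ioo_zero_one_Ioo_ne_zero hr₀) hur₀ ?_ hX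
  filter_upwards [hapos, ae_restrict_mem measurableSet_Ioo] with r har hr hr'
  have hle : u r₀ ≤ u r := hmono ⟨hr₀.1, hr₀.2.le⟩ (Ioo_subset_Icc_self hr) hr'.1.le
  have := hur₀.trans_le hle
  have := hr.1
  exact ⟨by positivity, hle⟩

end Radial

theorem statement14_general (N : ℕ) (p : ℝ) (hp1 : 1 < p)
    (a f f' : ℝ → ℝ) (hA : CondA a) (hF' : CondF' p f f') (hF'' : CondF'' p f)
    (u u' : ℝ → ℝ) (hu : Admissible N p u u')
    (hne : ¬ ∀ r ∈ Icc (0:ℝ) 1, u r = 0) :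
    ∃! t : ℝ, 0 < t ∧
      t ^ p * (Mnorm N p u u') ^ p
        = ∫ r in Ioo (0:ℝ) 1, a r * f (t * u r) * (t * u r) * r ^ (N - 1) := by
  obtain ⟨hunn, humono, -, huftc, huint⟩ := hu
  obtain ⟨-, -, -, hapos, haint⟩ := hA
  obtain ⟨hfd, -, hlim, -, γ, hγ, hAR⟩ := hF'
  have hp0 : 0 < p := one_pos.trans hp1
  have hf : ContinuousOn f (Ici 0) := fun t ht => (hfd t ht).continuousWithinAt
  have hgtop := tendsto_div_rpow_atTop_of_ambrosettiRabinowitz hf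
    (fun _ => pos_of_strictMonoOn_div_rpow hF'' hlim) hp0.le hγ hAR
  obtain ⟨r₀, hr₀, hur₀⟩ := exists_mem_Ico_pos_of_not_forall_eq_zero hunn huftc hne
  have hψ := existsUnique_pos_integral_weight_mul_comp_eq (N := N) hp0.le
    (continuous_ratioPosPart hp1 hf hlim) (monotone_ratioPosPart hp1 hF'' hlim)
    (ratioPosPart_nonneg hp1 hF'' hlim) (ratioPosPart_zero hp1.ne')
    (strictMonoOn_ratioPosPart hF'') (tendsto_ratioPosPart_atTop hgtop) hapos haint hunn humono
    hr₀ hur₀ (integral_energy_pos hunn humono huint hr₀ hur₀)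
  refine (existsUnique_congr fun t => and_congr_right fun ht => ?_).2 hψ
  rw [Mnorm_rpow hp0.ne' hunn,
    integral_mul_self_eq_rpow_mul_integral_ratioPosPart hp0.ne' hunn ht.le,
    mul_right_inj' (rpow_pos_of_pos ht p).ne', eq_comm]

/-- for every admissible `u` not identically zero, the ray through `u`
meets the Nehari set in exactly one point. -/
theorem statement14 (N : ℕ) (hN : 3 ≤ N) (p : ℝ) (hp1 : 1 < p)
    (a f f' : ℝ → ℝ) (hA : CondA a) (hF' : CondF' p f f') (hF'' : CondF'' p f)
    (u u' : ℝ → ℝ) (hu : Admissible N p u u')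
    (hne : ¬ ∀ r ∈ Icc (0:ℝ) 1, u r = 0) :
    ∃! t : ℝ, 0 < t ∧
      t ^ p * (Mnorm N p u u') ^ p
        = ∫ r in Ioo (0:ℝ) 1, a r * f (t * u r) * (t * u r) * r ^ (N - 1) :=
  statement14_general N p hp1 a f f' hA hF' hF'' u u' hu hne

end
end
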